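/- Let x_0,...,x_{q} be parameters, b ∈ ℝ^{q+1} the vector with entry d! in position d (0-indexed) and zeros elsewhere, and V the Vandermonde matrix with columns (1, x_i, ..., x_i^q). Then the determinant of the matrix obtained from V by replacing its j-th column with b equals (-1)^{j+d}·d!·∏_{m>n, m,n≠j}(x_m - x_n)·S(X_j, q-d), where S(X_j, q-d) is the elementary symmetric polynomial of degree q-d in the parameters {x_m : m ≠ j}. -/

import Mathlib

/-!
Replace `x j` by an indeterminate `X`. Expanding along row `j`, the `X ^ d` coefficient of the
determinant of the resulting Vandermonde matrix is the determinant with row `j` replaced by the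
`d`-th basis vector, which is the transpose of the matrix in the theorem up to the factor `d!`.
By the Vandermonde formula that determinant is
`±(∏ of the pairs avoiding j) * ∏_{m ≠ j} (X - x m)`, and Vieta's formula reads off its
`X ^ d` coefficient.
-/

open Polynomial Finset Matrix

lemma Finset.prod_X_sub_C_coeff {R ι : Type*} [CommRing R] (s : Finset ι) (f : ι → R) {k : ℕ}
    (h : k ≤ #s) :
    (∏ i ∈ s, (X - C (f i))).coeff k =
      (-1) ^ (#s - k) * ∑ t ∈ s.powersetCard (#s - k), ∏ i ∈ t, f i := by
  have := Multiset.prod_X_sub_C_coeff (s.val.map f) (k := k) (by simpa using h)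
  simp only [Multiset.map_map, Function.comp_def, Multiset.card_map, card_val] at this
  rw [← esymm_map_val, ← this]
  rfl

lemma Finset.prod_Iio_mul_prod_Ioi {α M : Type*} [LinearOrder α] [Fintype α]
    [LocallyFiniteOrderBot α] [LocallyFiniteOrderTop α] [CommMonoid M] (f : α → M) (a : α) :
    (∏ x ∈ Iio a, f x) * ∏ x ∈ Ioi a, f x = ∏ x ∈ univ.erase a, f x := by
  rw [← prod_union (disjoint_left.mpr fun x hlt hgt => (mem_Iio.mp hlt).not_gt (mem_Ioi.mp hgt))]
  congr 1
  ext x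
  simp [or_comm, eq_comm]

lemma neg_one_pow_sub_mul_neg_one_pow_sub {R : Type*} [Ring R] {q a b : ℕ} (ha : a ≤ q)
    (hb : b ≤ q) : (-1 : R) ^ (q - a) * (-1) ^ (q - b) = (-1) ^ (a + b) := by
  rw [← pow_add, neg_one_pow_eq_pow_mod_two, neg_one_pow_eq_pow_mod_two (a + b)]
  congr 1
  omega

lemma Fin.prod_prod_Iio_eq_mul_prod_Iio_mul_prod_Ioi {M : Type*} [CommMonoid M] {n : ℕ}
    (f : Fin n → Fin n → M) (j : Fin n) :
    ∏ m, ∏ k ∈ Iio m, f m k =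
      (∏ m, ∏ k ∈ Iio m, if m ≠ j ∧ k ≠ j then f m k else 1) *
        ((∏ k ∈ Iio j, f j k) * ∏ m ∈ Ioi j, f m j) := by
  have hsplit : ∀ m, ∀ k ∈ Iio m, f m k = (if m ≠ j ∧ k ≠ j then f m k else 1) *
      ((if m = j then f m k else 1) * if k = j then f m k else 1) := by
    intro m k hk
    have : k ≠ m := (mem_Iio.mp hk).ne
    by_cases hm : m = j <;> by_cases hk : k = j <;> simp_all
  rw [prod_congr rfl fun m _ => prod_congr rfl (hsplit m)]
  simp only [prod_mul_distrib, prod_ite_eq', prod_ite_irrel, prod_const_one, mem_univ, if_true,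
    mem_Iio, ← prod_filter]
  congr 3
  ext m
  simp

namespace Matrix

variable {R : Type*} [CommRing R] {n : ℕ}

lemma det_vandermonde_eq_prod_Iio (v : Fin n → R) :
    (vandermonde v).det = ∏ m, ∏ k ∈ Iio m, (v m - v k) := by
  rw [det_vandermonde]
  exact prod_comm' (by simp)

lemma vandermonde_update (v : Fin n → R) (j : Fin n) (a : R) :
    vandermonde (Function.update v j a) = (vandermonde v).updateRow j (fun k => a ^ (k : ℕ)) := by
  ext i k
  rcases eq_or_ne i j with rfl | h <;> simp [vandermonde_apply, *]

lemma vandermonde_map {R' : Type*} [CommRing R'] (f : R →+* R') (v : Fin n → R) :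
    (vandermonde v).map f = vandermonde (f ∘ v) := by
  ext i k
  simp [vandermonde_apply]

lemma det_map_C_updateRow_X_pow_eq_sum (M : Matrix (Fin n) (Fin n) R) (j : Fin n) :
    ((M.map C).updateRow j (fun k => X ^ (k : ℕ))).det =
      ∑ k : Fin n, X ^ (k : ℕ) * C (M.updateRow j (Pi.single k 1)).det := by
  rw [det_eq_sum_mul_adjugate_row _ j]
  refine sum_congr rfl fun k _ => ?_
  rw [adjugate_apply, updateRow_self, updateRow_idem, RingHom.map_det, RingHom.mapMatrix_apply,
    map_updateRow]
  congr 3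
  ext i
  simp [Pi.single_apply, apply_ite C]

lemma coeff_det_map_C_updateRow_X_pow (M : Matrix (Fin n) (Fin n) R) (j d : Fin n) :
    ((M.map C).updateRow j (fun k => X ^ (k : ℕ))).det.coeff d =
      (M.updateRow j (Pi.single d 1)).det := by
  simp_rw [det_map_C_updateRow_X_pow_eq_sum, finsetSum_coeff, mul_comm (X ^ _), coeff_C_mul_X_pow,
    Fin.val_inj, sum_ite_eq, mem_univ, if_true]

lemma det_vandermonde_update_X (x : Fin (n + 1) → R) (j : Fin (n + 1)) :
    (vandermonde (Function.update (C ∘ x) j X)).det =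
      C ((∏ m, ∏ k ∈ Iio m, if m ≠ j ∧ k ≠ j then x m - x k else 1) * (-1) ^ (n - j)) *
        ∏ m ∈ univ.erase j, (X - C (x m)) := by
  rw [det_vandermonde_eq_prod_Iio, Fin.prod_prod_Iio_eq_mul_prod_Iio_mul_prod_Ioi _ j, map_mul,
    map_prod, mul_assoc]
  congr 1
  · refine prod_congr rfl fun m _ => ?_
    rw [map_prod]
    refine prod_congr rfl fun k _ => ?_
    split_ifs with h
    · simp [Function.update_of_ne h.1, Function.update_of_ne h.2]
    · simp
  · have hIio : ∀ k ∈ Iio j,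
        Function.update (C ∘ x) j X j - Function.update (C ∘ x) j X k = X - C (x k) :=
      fun k hk => by
      simp [Function.update_of_ne (mem_Iio.mp hk).ne]
    have hIoi : ∀ m ∈ Ioi j,
        Function.update (C ∘ x) j X m - Function.update (C ∘ x) j X j = -(X - C (x m)) :=
      fun m hm => by
      simp [Function.update_of_ne (mem_Ioi.mp hm).ne']
    rw [prod_congr rfl hIio, prod_congr rfl hIoi, prod_neg, Fin.card_Ioi, Nat.add_sub_cancel,
      ← prod_Iio_mul_prod_Ioi]
    simp only [map_pow, map_neg, map_one]
    ring

end Matrix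

/-- The determinant of the Vandermonde matrix with its `j`-th column replaced by the
vector with `d!` in position `d` and zeros elsewhere equals
`(-1)^(j+d) d! ∏_{m>n, m,n≠j}(x_m - x_n) · S(X_j, q-d)`. -/
theorem stmt4 (q d : ℕ) (hd : d ≤ q) (x : Fin (q + 1) → ℝ) (j : Fin (q + 1)) :
    ((Matrix.of fun i i' : Fin (q + 1) => x i' ^ (i : ℕ)).updateCol j
        (fun i => if (i : ℕ) = d then (d.factorial : ℝ) else 0)).det =
      (-1 : ℝ) ^ ((j : ℕ) + d) * d.factorial *
        (∏ m : Fin (q + 1), ∏ n ∈ Finset.Iio m,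
          if m ≠ j ∧ n ≠ j then x m - x n else 1) *
        ∑ σ ∈ (Finset.univ.erase j).powersetCard (q - d), ∏ l ∈ σ, x l := by
  set D : Fin (q + 1) := ⟨d, Nat.lt_succ_of_le hd⟩
  have hcol : (fun i : Fin (q + 1) => if (i : ℕ) = d then (d.factorial : ℝ) else 0) =
      (d.factorial : ℝ) • Pi.single D 1 := by
    ext i
    simp [Pi.single_apply, D, Fin.ext_iff]
  have hV : (Matrix.of fun i i' : Fin (q + 1) => x i' ^ (i : ℕ)) = (vandermonde x)ᵀ := rfl
  have hW : ((vandermonde x).map C).updateRow j (fun k => X ^ (k : ℕ)) =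
      vandermonde (Function.update (C ∘ x) j X) := by
    rw [vandermonde_update, vandermonde_map]
  have hcard : #(univ.erase j) = q := by simp
  rw [hV, hcol, updateCol_transpose, det_transpose, det_updateRow_smul,
    ← coeff_det_map_C_updateRow_X_pow, hW, det_vandermonde_update_X, coeff_C_mul,
    prod_X_sub_C_coeff _ _ (by rw [hcard]; exact hd), hcard,
    ← neg_one_pow_sub_mul_neg_one_pow_sub j.is_le hd]
  ring
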